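/- Let T be a compact metric space and g : T → T a continuous surjective map. If the periodic points of g are dense in NW(g), then the periodic points of the shift map ĝ : Π_g → Π_g are dense in NW(ĝ). -/

import Mathlib

/-- A point `x` is non-wandering for `h` if for every neighborhood `U` of `x`
there is `n ≥ 1` with `h^n(U) ∩ U ≠ ∅`. -/
def NonWandering {X : Type*} [TopologicalSpace X] (h : X → X) (x : X) : Prop :=
  ∀ U ∈ nhds x, ∃ n ≥ 1, (h^[n] '' U ∩ U).Nonempty

/-- The inverse limit Π_g of a map g : T → T. -/
abbrev InvLim {T : Type*} (g : T → T) : Type _ :=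
  {t : ℕ → T // ∀ i : ℕ, g (t (i + 1)) = t i}

/-- The shift map ĝ : Π_g → Π_g, ĝ(t_0, t_1, …) = (g(t_0), t_0, t_1, …). -/
def shiftMap {T : Type*} (g : T → T) (t : InvLim g) : InvLim g :=
  ⟨fun i => Nat.casesOn i (g (t.1 0)) fun j => t.1 j, by
    intro i
    cases i with
    | zero => rfl
    | succ j => exact t.2 j⟩

/-!
A point of `Π_g` is pinned down, up to a basic neighbourhood, by a single coordinate `t_N`,
because the earlier coordinates are the images `g^[N - i] t_N`. The projection to that
coordinate semiconjugates `ĝ` to `g`, so it carries non-wandering points of `ĝ` to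
non-wandering points of `g`; near the image there is a periodic point `p` of `g`, and `p`
lifts to a periodic thread of `ĝ` whose `N`-th coordinate is `p`.
-/

open Function Filter Topology

theorem NonWandering.map_of_semiconj {X Y : Type*} [TopologicalSpace X] [TopologicalSpace Y]
    {π : X → Y} {f : X → X} {g : Y → Y} (h : Semiconj π f g) (hπ : Continuous π) {x : X}
    (hx : NonWandering f x) : NonWandering g (π x) := by
  intro U hU
  obtain ⟨n, hn, _, ⟨w, hw, rfl⟩, hz⟩ := hx _ (hπ.continuousAt.preimage_mem_nhds hU)
  exact ⟨n, hn, π (f^[n] w), ⟨π w, hw, (h.iterate_right n w).symm⟩, hz⟩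

namespace InvLim

variable {T : Type*} {g : T → T}

theorem iterate_val_add (t : InvLim g) (i k : ℕ) : g^[k] (t.1 (i + k)) = t.1 i := by
  induction k with
  | zero => rfl
  | succ k ih => rw [iterate_succ_apply, ← Nat.add_assoc, t.2 (i + k), ih]

theorem semiconj_val_shiftMap (i : ℕ) : Semiconj (fun t : InvLim g => t.1 i) (shiftMap g) g := by
  intro t
  cases i with
  | zero => rfl
  | succ j => exact (t.2 j).symm

theorem val_shiftMap_iterate (t : InvLim g) (k i : ℕ) :
    ((shiftMap g)^[k] t).1 i = g^[k] (t.1 i) :=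
  (semiconj_val_shiftMap i).iterate_right k t

theorem exists_isPeriodicPt_shiftMap_val_eq {p : T} {n : ℕ} (hp : IsPeriodicPt g n p) (hn : 0 < n)
    (N : ℕ) :
    ∃ t : InvLim g, IsPeriodicPt (shiftMap g) n t ∧ t.1 N = p := by
  obtain ⟨k, rfl⟩ : ∃ k, n = k + 1 := ⟨n - 1, by omega⟩
  -- The thread `j ↦ g^[k * j] p` through `p` walks backwards along the orbit of `p`.
  let s : InvLim g := ⟨fun j => g^[k * j] p, fun j => by
    rw [← iterate_succ_apply' g, Nat.succ_eq_add_one,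
      show k * (j + 1) + 1 = k * j + (k + 1) by ring, iterate_add_apply, hp.eq]⟩
  have hs : IsPeriodicPt (shiftMap g) (k + 1) s := Subtype.ext <| funext fun j => by
    rw [val_shiftMap_iterate]
    exact hp.apply_iterate (k * j)
  refine ⟨(shiftMap g)^[N] s, hs.apply_iterate N, ?_⟩
  rw [val_shiftMap_iterate, ← iterate_add_apply, show N + k * N = (k + 1) * N by ring]
  exact hp.mul_const N

variable [TopologicalSpace T]

theorem continuous_val_apply (i : ℕ) : Continuous fun t : InvLim g => t.1 i :=
  (continuous_apply i).comp continuous_subtype_val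

theorem nhds_eq_iInf_comap (x : InvLim g) :
    𝓝 x = ⨅ i, comap (fun t : InvLim g => t.1 i) (𝓝 (x.1 i)) := by
  rw [nhds_induced, nhds_pi, Filter.pi, comap_iInf]
  simp only [comap_comap]
  rfl

theorem antitone_comap_nhds_val (hg : Continuous g) (x : InvLim g) :
    Antitone fun i => comap (fun t : InvLim g => t.1 i) (𝓝 (x.1 i)) := by
  intro i j hij
  obtain ⟨k, rfl⟩ := Nat.exists_eq_add_of_le hij
  change comap _ _ ≤ comap _ _
  have hval : (fun t : InvLim g => t.1 i) = g^[k] ∘ fun t : InvLim g => t.1 (i + k) :=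
    funext fun t => (iterate_val_add t i k).symm
  rw [hval, ← comap_comap, ← iterate_val_add x i k]
  exact comap_mono ((hg.iterate k).tendsto _).le_comap

theorem exists_val_preimage_subset (hg : Continuous g) {x : InvLim g} {W : Set (InvLim g)}
    (hW : W ∈ 𝓝 x) : ∃ N, ∃ V ∈ 𝓝 (x.1 N), (fun t : InvLim g => t.1 N) ⁻¹' V ⊆ W := by
  rw [nhds_eq_iInf_comap,
    mem_iInf_of_directed (antitone_comap_nhds_val hg x).directed_ge] at hW
  obtain ⟨N, hN⟩ := hW
  exact ⟨N, mem_comap.mp hN⟩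

end InvLim

theorem stmt13_general {T : Type*} [MetricSpace T]
    (g : T → T) (hgc : Continuous g)
    (hdense : {x | NonWandering g x} ⊆ closure {x | ∃ m ≥ 1, g^[m] x = x}) :
    {x : InvLim g | NonWandering (shiftMap g) x} ⊆
      closure {x : InvLim g | ∃ m ≥ 1, (shiftMap g)^[m] x = x} := by
  intro x hx
  rw [mem_closure_iff_nhds]
  intro W hW
  obtain ⟨N, V, hV, hVW⟩ := InvLim.exists_val_preimage_subset hgc hW
  have hxN : NonWandering g (x.1 N) :=
    hx.map_of_semiconj (InvLim.semiconj_val_shiftMap N) (InvLim.continuous_val_apply N)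
  obtain ⟨p, hpV, n, hn, hp⟩ := mem_closure_iff_nhds.mp (hdense hxN) V hV
  obtain ⟨t, ht, rfl⟩ := InvLim.exists_isPeriodicPt_shiftMap_val_eq hp hn N
  exact ⟨t, hVW hpV, n, hn, ht⟩

/-- if the periodic points of g are dense in NW(g), then the
periodic points of the shift map ĝ are dense in NW(ĝ). -/
theorem stmt13 {T : Type*} [MetricSpace T] [CompactSpace T]
    (g : T → T) (hgc : Continuous g) (hgs : Function.Surjective g)
    (hdense : {x | NonWandering g x} ⊆ closure {x | ∃ m ≥ 1, g^[m] x = x}) :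
    {x : InvLim g | NonWandering (shiftMap g) x} ⊆
      closure {x : InvLim g | ∃ m ≥ 1, (shiftMap g)^[m] x = x} :=
  stmt13_general g hgc hdense
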